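/- arXiv:2405.16672 — 4 statements merged into one kernel-verified Lean document; each statement's English description precedes it below -/
import Mathlib

section
/- Let A ∈ {0,1}^{n×n} have all entries i.i.d. Bernoulli(p) with np ≥ 1, and set Ã = A/√(np). Then Var(‖Ã^T Ã‖_F^2) ≤ C(n + n^2 p^2 + n^3 p^4) for a universal constant C. -/
open MeasureTheory ProbabilityTheory Matrix

/-- A real random variable is Bernoulli(p): it takes values in `{0,1}` and
takes the value `1` with probability `p`. -/
def IsBernoulli {Ω : Type*} [MeasurableSpace Ω] (μ : Measure Ω) (A : Ω → ℝ) (p : ℝ) : Prop :=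
  (∀ ω, A ω = 0 ∨ A ω = 1) ∧ μ {ω | A ω = 1} = ENNReal.ofReal p

open Finset

/-!
Write `Z i j = ((AᵀA) i j)²`, so that the variance is `∑ cov(Z i j, Z k l)`. Since `Z i j` only
depends on the columns `i` and `j` of `A`, the covariance vanishes unless `{i, j}` and `{k, l}`
meet, and otherwise it is at most `E[Z i j * Z k l]`; by symmetry it suffices to treat `k = i`.

Expanding the squares, `E[Z i j * Z k l]` is a sum over rows `r₁, …, r₄` of `p ^ #S` with
`S = {r₁, r₂} × {i, j} ∪ {r₃, r₄} × {k, l}`, because the entries are idempotent and independent.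
Inclusion–exclusion expresses `#S` through `#{r₁, r₂, r₃, r₄}`, `#{r₁, r₂}` and `#{r₃, r₄}`, and
such sums are bounded by summing out one row at a time: a new row either repeats one of the at
most three rows already chosen, or brings a factor `p` for each new entry and has `n` choices.
-/

section Counting

variable {α : Type*} [Fintype α] [DecidableEq α]

lemma sum_pow_card_insert_mul_pow_card_insert_le {q a : ℝ} (hq : 0 ≤ q) (ha : 0 ≤ a)
    {s t : Finset α} (hts : t ⊆ s) :
    ∑ r, q ^ #(insert r s) * a ^ #(insert r t)
      ≤ (#t + #s * a + Fintype.card α * (q * a)) * (q ^ #s * a ^ #t) := by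
  set W := q ^ #s * a ^ #t
  have hW : 0 ≤ W := by positivity
  have hr (r : α) : q ^ #(insert r s) * a ^ #(insert r t)
      ≤ (if r ∈ t then 1 else 0) * W + (if r ∈ s then a else 0) * W + q * a * W := by
    by_cases hrt : r ∈ t
    · simp only [hrt, hts hrt, insert_eq_of_mem, if_true, one_mul]
      nlinarith [mul_nonneg ha hW, mul_nonneg (mul_nonneg hq ha) hW]
    by_cases hrs : r ∈ s
    · simp only [hrt, hrs, insert_eq_of_mem, card_insert_of_notMem, not_false_eq_true, if_true,
        if_false, pow_succ]
      nlinarith [mul_nonneg (mul_nonneg hq ha) hW]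
    · simp only [hrt, hrs, card_insert_of_notMem, not_false_eq_true, if_false, pow_succ]
      linarith [le_of_eq (by ring : q ^ #s * q * (a ^ #t * a) = q * a * W)]
  calc ∑ r, q ^ #(insert r s) * a ^ #(insert r t)
      ≤ ∑ r, ((if r ∈ t then 1 else 0) * W + (if r ∈ s then a else 0) * W + q * a * W) :=
        sum_le_sum fun r _ => hr r
    _ = _ := by
        simp only [sum_add_distrib, ← sum_mul, sum_boole, sum_ite_mem, univ_inter, sum_const,
          card_univ, nsmul_eq_mul, filter_mem_eq_of_subset (subset_univ _)]
        ring

lemma sum_pow_card_insert_le {q : ℝ} (hq : 0 ≤ q) (s : Finset α) :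
    ∑ r, q ^ #(insert r s) ≤ (#s + Fintype.card α * q) * q ^ #s := by
  simpa using sum_pow_card_insert_mul_pow_card_insert_le hq zero_le_one (empty_subset s)

lemma sum_pow_card_quadruple_le {q a b : ℝ} (hq : 0 ≤ q) (ha : 0 ≤ a) (hb : 0 ≤ b) :
    ∑ r₁ : α, ∑ r₂ : α, ∑ r₃ : α, ∑ r₄ : α,
        q ^ #{r₁, r₂, r₃, r₄} * a ^ #{r₁, r₂} * b ^ #{r₃, r₄}
      ≤ Fintype.card α * q * a * (1 + Fintype.card α * q * a) * (2 + Fintype.card α * q)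
          * (1 + 3 * b + Fintype.card α * q * b) * b := by
  have sum_r₄ (r₁ r₂ r₃ : α) : ∑ r₄ : α, q ^ #{r₁, r₂, r₃, r₄} * b ^ #{r₃, r₄}
      ≤ (1 + 3 * b + Fintype.card α * q * b) * b * q ^ #{r₁, r₂, r₃} := by
    have hcard : (#{r₁, r₂, r₃} : ℝ) ≤ 3 := by exact_mod_cast card_le_three
    have hperm (r₄ : α) : ({r₁, r₂, r₃, r₄} : Finset α) = insert r₄ {r₁, r₂, r₃} := by
      ext; simp only [mem_insert, mem_singleton]; tauto
    rw [sum_congr rfl fun r₄ _ => by rw [hperm r₄, pair_comm r₃ r₄]]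
    calc _ ≤ _ := sum_pow_card_insert_mul_pow_card_insert_le hq hb (by simp)
      _ ≤ (1 + 3 * b + Fintype.card α * (q * b)) * (q ^ #{r₁, r₂, r₃} * b ^ 1) := by
        rw [card_singleton, Nat.cast_one]; gcongr
      _ = _ := by ring
  have sum_r₃ (r₁ r₂ : α) : ∑ r₃ : α, q ^ #{r₁, r₂, r₃}
      ≤ (2 + Fintype.card α * q) * q ^ #{r₁, r₂} := by
    have hcard : (#{r₁, r₂} : ℝ) ≤ 2 := by exact_mod_cast card_le_two
    have hperm (r₃ : α) : ({r₁, r₂, r₃} : Finset α) = insert r₃ {r₁, r₂} := by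
      ext; simp only [mem_insert, mem_singleton]; tauto
    simp only [hperm]
    exact (sum_pow_card_insert_le hq _).trans (by gcongr)
  have sum_r₂ (r₁ : α) : ∑ r₂ : α, (q * a) ^ #{r₁, r₂}
      ≤ (1 + Fintype.card α * (q * a)) * (q * a) := by
    simpa [pair_comm r₁] using sum_pow_card_insert_le (mul_nonneg hq ha) {r₁}
  set K₄ := (1 + 3 * b + Fintype.card α * q * b) * b
  have hK₄ : 0 ≤ K₄ := by positivity
  calc ∑ r₁ : α, ∑ r₂ : α, ∑ r₃ : α, ∑ r₄ : α,
        q ^ #{r₁, r₂, r₃, r₄} * a ^ #{r₁, r₂} * b ^ #{r₃, r₄}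
      = ∑ r₁ : α, ∑ r₂ : α, a ^ #{r₁, r₂} * ∑ r₃ : α, ∑ r₄ : α,
          q ^ #{r₁, r₂, r₃, r₄} * b ^ #{r₃, r₄} := by
        simp only [mul_sum]; congr! 4; ring
    _ ≤ ∑ r₁ : α, ∑ r₂ : α, a ^ #{r₁, r₂} * ∑ r₃ : α, K₄ * q ^ #{r₁, r₂, r₃} := by
        gcongr with r₁ _ r₂ _ r₃; exact sum_r₄ r₁ r₂ r₃
    _ ≤ ∑ r₁ : α, ∑ r₂ : α,
          a ^ #{r₁, r₂} * (K₄ * ((2 + Fintype.card α * q) * q ^ #{r₁, r₂})) := by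
        gcongr with r₁ _ r₂; rw [← mul_sum]; gcongr; exact sum_r₃ r₁ r₂
    _ = K₄ * (2 + Fintype.card α * q) * ∑ r₁ : α, ∑ r₂ : α, (q * a) ^ #{r₁, r₂} := by
        simp only [mul_sum, mul_pow]; congr! 2; ring
    _ ≤ K₄ * (2 + Fintype.card α * q) *
          ∑ _r₁ : α, (1 + Fintype.card α * (q * a)) * (q * a) := by
        gcongr with r₁; exact sum_r₂ r₁
    _ = _ := by rw [sum_const, card_univ, nsmul_eq_mul]; ring

end Counting

lemma sum_ite_shared_le {β : Type*} [Fintype β] [DecidableEq β] {f : β → β → β → β → ℝ}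
    (hf : ∀ i j k l, 0 ≤ f i j k l) (hswap₁ : ∀ i j k l, f i j k l = f j i k l)
    (hswap₂ : ∀ i j k l, f i j k l = f i j l k) :
    ∑ i, ∑ j, ∑ k, ∑ l, (if i = k ∨ i = l ∨ j = k ∨ j = l then f i j k l else 0)
      ≤ 4 * ∑ i, ∑ j, ∑ l, f i j i l := by
  calc ∑ i, ∑ j, ∑ k, ∑ l, (if i = k ∨ i = l ∨ j = k ∨ j = l then f i j k l else 0)
      ≤ ∑ i, ∑ j, ∑ k, ∑ l, ((if i = k then f i j k l else 0) + (if i = l then f i j k l else 0)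
          + (if j = k then f i j k l else 0) + (if j = l then f i j k l else 0)) := by
        gcongr with i _ j _ k _ l _
        have := hf i j k l
        split_ifs <;> first | linarith | (exfalso; tauto)
    _ = 4 * ∑ i, ∑ j, ∑ l, f i j i l := by
        simp only [sum_add_distrib, sum_ite_eq, mem_univ, if_true, sum_ite_irrel, sum_const_zero]
        have h₂ : ∑ i, ∑ j, ∑ k, f i j k i = ∑ i, ∑ j, ∑ l, f i j i l :=
          sum_congr rfl fun i _ => sum_congr rfl fun j _ => sum_congr rfl fun k _ => hswap₂ i j k i
        have h₃ : ∑ i, ∑ j, ∑ l, f i j j l = ∑ i, ∑ j, ∑ l, f i j i l := by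
          rw [sum_comm]
          exact sum_congr rfl fun i _ => sum_congr rfl fun j _ => sum_congr rfl fun l _ =>
            hswap₁ j i i l
        have h₄ : ∑ i, ∑ j, ∑ k, f i j k j = ∑ i, ∑ j, ∑ l, f i j i l := by
          rw [sum_comm]
          exact sum_congr rfl fun i _ => sum_congr rfl fun j _ => sum_congr rfl fun k _ =>
            (hswap₁ j i k i).trans (hswap₂ i j k i)
        rw [h₂, h₃, h₄]
        ring

section Support

variable {α β : Type*} [DecidableEq α] [DecidableEq β]

lemma card_product_union_product_add (A C : Finset α) (B D : Finset β) :
    #(A ×ˢ B ∪ C ×ˢ D) + #(A ∩ C) * #(B ∩ D) = #A * #B + #C * #D := by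
  rw [← card_product, ← product_inter_product, card_union_add_card_inter, card_product,
    card_product]

lemma card_product_union_product_of_ne (A C : Finset α) {i j l : β} (hjl : j ≠ l) :
    #(A ×ˢ {i, j} ∪ C ×ˢ {i, l})
      = #(A ∪ C) + (if j = i then 0 else #A) + (if l = i then 0 else #C) := by
  have hinter : ({i, j} : Finset β) ∩ {i, l} = {i} := by
    rw [← insert_inter_distrib, singleton_inter_of_notMem (by simpa using hjl), insert_empty]
  have h := card_product_union_product_add A C {i, j} {i, l}
  rw [hinter, card_singleton, mul_one, card_insert_eq_ite, card_insert_eq_ite] at h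
  have hAC := card_union_add_card_inter A C
  simp only [mem_singleton, card_singleton, eq_comm (a := i)] at h
  split_ifs at h ⊢ <;> omega

end Support

section CrossMoment

variable {α β : Type*} [Fintype α] [DecidableEq α] [DecidableEq β]

variable (α) in
/-- The value of `E[(AᵀA) i j ^ 2 * (AᵀA) k l ^ 2]` for a matrix `A` with i.i.d. Bernoulli(p)
entries: the term of the expanded product indexed by the rows `r₁, r₂, r₃, r₄` is the product of
the entries in `{r₁, r₂} ×ˢ {i, j} ∪ {r₃, r₄} ×ˢ {k, l}`. -/
def gramCrossMoment (p : ℝ) (i j k l : β) : ℝ :=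
  ∑ r₁ : α, ∑ r₂ : α, ∑ r₃ : α, ∑ r₄ : α, p ^ #({r₁, r₂} ×ˢ {i, j} ∪ {r₃, r₄} ×ˢ {k, l})

lemma gramCrossMoment_nonneg {p : ℝ} (hp : 0 ≤ p) (i j k l : β) :
    0 ≤ gramCrossMoment α p i j k l := by
  unfold gramCrossMoment; positivity

lemma gramCrossMoment_comm_left (p : ℝ) (i j k l : β) :
    gramCrossMoment α p i j k l = gramCrossMoment α p j i k l := by
  simp only [gramCrossMoment, pair_comm i j]

lemma gramCrossMoment_comm_right (p : ℝ) (i j k l : β) :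
    gramCrossMoment α p i j k l = gramCrossMoment α p i j l k := by
  simp only [gramCrossMoment, pair_comm k l]

lemma gramCrossMoment_self_le {p : ℝ} (hp : 0 ≤ p) (i j : β) :
    gramCrossMoment α p i j i j
      ≤ Fintype.card α * p ^ #{i, j} * (1 + Fintype.card α * p ^ #{i, j})
        * (2 + Fintype.card α * p ^ #{i, j}) * (4 + Fintype.card α * p ^ #{i, j}) := by
  have h := sum_pow_card_quadruple_le (α := α) (pow_nonneg hp #{i, j}) zero_le_one zero_le_one
  simp only [one_pow, mul_one] at h
  refine le_of_eq_of_le (sum_congr rfl fun r₁ _ => sum_congr rfl fun r₂ _ =>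
    sum_congr rfl fun r₃ _ => sum_congr rfl fun r₄ _ => ?_) (h.trans_eq (by ring))
  rw [← union_product, insert_union, singleton_union, card_product, ← pow_mul, mul_comm]

lemma gramCrossMoment_le_of_ne {p a b : ℝ} (hp : 0 ≤ p) {i j l : β} (hjl : j ≠ l)
    (ha : a = if j = i then 1 else p) (hb : b = if l = i then 1 else p) :
    gramCrossMoment α p i j i l
      ≤ Fintype.card α * p * a * (1 + Fintype.card α * p * a) * (2 + Fintype.card α * p)
          * (1 + 3 * b + Fintype.card α * p * b) * b := by
  have ha0 : 0 ≤ a := by rw [ha]; split_ifs <;> positivity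
  have hb0 : 0 ≤ b := by rw [hb]; split_ifs <;> positivity
  refine le_of_eq_of_le (sum_congr rfl fun r₁ _ => sum_congr rfl fun r₂ _ =>
    sum_congr rfl fun r₃ _ => sum_congr rfl fun r₄ _ => ?_) (sum_pow_card_quadruple_le hp ha0 hb0)
  rw [card_product_union_product_of_ne _ _ hjl, insert_union, singleton_union, ha, hb]
  split_ifs <;> simp [pow_add]

lemma gramCrossMoment_self_self_le {n : ℕ} (hα : Fintype.card α = n) {p : ℝ} (hp : 0 ≤ p)
    (hnp : 1 ≤ n * p) (i : β) :
    gramCrossMoment α p i i i i ≤ 30 * (n * p) ^ 4 := by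
  have h := gramCrossMoment_self_le (α := α) hp i i
  simp only [pair_eq_singleton, card_singleton, pow_one, hα] at h
  calc _ ≤ _ := h
    _ ≤ (n : ℝ) * p * (2 * (n * p)) * (3 * (n * p)) * (5 * (n * p)) := by gcongr <;> linarith
    _ = _ := by ring

lemma gramCrossMoment_pair_pair_le {n : ℕ} (hα : Fintype.card α = n) {p : ℝ} (hp : 0 ≤ p)
    {i j : β} (hij : i ≠ j) :
    gramCrossMoment α p i j i j ≤ 30 * (n * p ^ 2 + (n * p ^ 2) ^ 4) := by
  have h := gramCrossMoment_self_le (α := α) hp i j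
  rw [card_pair hij, hα] at h
  set y := (n : ℝ) * p ^ 2
  have hy : 0 ≤ y := by positivity
  nlinarith [mul_nonneg hy (sq_nonneg (y - 1)), mul_nonneg hy (mul_nonneg hy (sq_nonneg (y - 1))),
    pow_nonneg hy 3, pow_nonneg hy 4]

lemma gramCrossMoment_self_pair_le {n : ℕ} (hα : Fintype.card α = n) {p : ℝ} (hp0 : 0 ≤ p)
    (hnp : 1 ≤ n * p) {i l : β} (hil : i ≠ l) :
    gramCrossMoment α p i i i l ≤ 24 * (n * p) ^ 3 * p * (1 + n * p ^ 2) := by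
  have h := gramCrossMoment_le_of_ne (α := α) (i := i) (a := 1) (b := p) hp0 hil (by simp)
    (by simp [Ne.symm hil])
  rw [hα] at h
  calc _ ≤ _ := h
    _ ≤ (n : ℝ) * p * (2 * (n * p)) * (3 * (n * p)) * (4 * (1 + n * p * p)) * p := by
      simp only [mul_one]; gcongr <;> nlinarith
    _ = _ := by ring

lemma gramCrossMoment_pair_self_le {n : ℕ} (hα : Fintype.card α = n) {p : ℝ} (hp0 : 0 ≤ p)
    (hnp : 1 ≤ n * p) {i j : β} (hij : i ≠ j) :
    gramCrossMoment α p i j i i ≤ 24 * (n * p) ^ 3 * p * (1 + n * p ^ 2) := by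
  have h := gramCrossMoment_le_of_ne (α := α) (i := i) (a := p) (b := 1) hp0 hij.symm
    (by simp [hij.symm]) (by simp)
  rw [hα] at h
  calc _ ≤ _ := h
    _ ≤ (n : ℝ) * p * p * (1 + n * p * p) * (3 * (n * p)) * (8 * (n * p)) := by
      simp only [mul_one]; gcongr <;> linarith
    _ = _ := by ring

lemma gramCrossMoment_le_of_pairwise_ne {n : ℕ} (hα : Fintype.card α = n) {p : ℝ}
    (hp0 : 0 ≤ p) (hnp : 1 ≤ n * p) {i j l : β} (hij : i ≠ j) (hil : i ≠ l) (hjl : j ≠ l) :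
    gramCrossMoment α p i j i l ≤ 12 * (n * p) ^ 2 * p ^ 2 * (1 + n * p ^ 2) ^ 2 := by
  have h := gramCrossMoment_le_of_ne (α := α) (i := i) (a := p) (b := p) hp0 hjl
    (by simp [hij.symm]) (by simp [hil.symm])
  rw [hα] at h
  calc _ ≤ _ := h
    _ ≤ (n : ℝ) * p * p * (1 + n * p * p) * (3 * (n * p)) * (4 * (1 + n * p * p)) * p := by
      gcongr <;> nlinarith
    _ = _ := by ring

lemma gramCrossMoment_le {n : ℕ} (hα : Fintype.card α = n) {p : ℝ} (hp0 : 0 ≤ p)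
    (hnp : 1 ≤ n * p) (i j l : β) :
    gramCrossMoment α p i j i l
      ≤ (if j = i ∧ l = i then 30 * (n * p) ^ 4 else 0)
        + (if j = l then 30 * (n * p ^ 2 + (n * p ^ 2) ^ 4) else 0)
        + (if j = i then 24 * (n * p) ^ 3 * p * (1 + n * p ^ 2) else 0)
        + (if l = i then 24 * (n * p) ^ 3 * p * (1 + n * p ^ 2) else 0)
        + 12 * (n * p) ^ 2 * p ^ 2 * (1 + n * p ^ 2) ^ 2 := by
  have hK₁ : 0 ≤ 30 * ((n : ℝ) * p) ^ 4 := by positivity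
  have hK₃ : 0 ≤ 30 * ((n : ℝ) * p ^ 2 + (n * p ^ 2) ^ 4) := by positivity
  have hK₂ : 0 ≤ 24 * ((n : ℝ) * p) ^ 3 * p * (1 + n * p ^ 2) := by positivity
  have hK₄ : 0 ≤ 12 * ((n : ℝ) * p) ^ 2 * p ^ 2 * (1 + n * p ^ 2) ^ 2 := by positivity
  rcases eq_or_ne j l with rfl | hjl
  · rcases eq_or_ne j i with rfl | hji
    · simp only [and_self, if_true]
      linarith [gramCrossMoment_self_self_le hα hp0 hnp j]
    · simp only [hji, and_self, if_true, if_false]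
      linarith [gramCrossMoment_pair_pair_le hα hp0 hji.symm]
  rcases eq_or_ne j i with rfl | hji
  · simp only [hjl, hjl.symm, and_false, if_true, if_false]
    linarith [gramCrossMoment_self_pair_le hα hp0 hnp hjl]
  rcases eq_or_ne l i with rfl | hli
  · simp only [hji, false_and, if_true, if_false]
    linarith [gramCrossMoment_pair_self_le hα hp0 hnp hjl.symm]
  · simp only [hji, hli, hjl, false_and, if_false]
    linarith [gramCrossMoment_le_of_pairwise_ne hα hp0 hnp hji.symm hli.symm hjl]

lemma sum_sum_gramCrossMoment_le {n : ℕ} (hα : Fintype.card α = n) {p : ℝ} (hp0 : 0 ≤ p)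
    (hp1 : p ≤ 1) (hnp : 1 ≤ n * p) (i : α) :
    ∑ j, ∑ l, gramCrossMoment α p i j i l
      ≤ 132 * (n * p) ^ 4 * (1 + n * p ^ 2 + n ^ 2 * p ^ 4) := by
  have hn : (0 : ℝ) ≤ n := n.cast_nonneg
  calc ∑ j, ∑ l, gramCrossMoment α p i j i l
      ≤ ∑ j, ∑ l, ((if j = i ∧ l = i then 30 * (n * p) ^ 4 else 0)
        + (if j = l then 30 * (n * p ^ 2 + (n * p ^ 2) ^ 4) else 0)
        + (if j = i then 24 * (n * p) ^ 3 * p * (1 + n * p ^ 2) else 0)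
        + (if l = i then 24 * (n * p) ^ 3 * p * (1 + n * p ^ 2) else 0)
        + 12 * (n * p) ^ 2 * p ^ 2 * (1 + n * p ^ 2) ^ 2) := by
        gcongr with j _ l _; exact gramCrossMoment_le hα hp0 hnp i j l
    _ = 30 * (n * p) ^ 4 + n * (30 * (n * p ^ 2 + (n * p ^ 2) ^ 4))
        + 2 * n * (24 * (n * p) ^ 3 * p * (1 + n * p ^ 2))
        + n ^ 2 * (12 * (n * p) ^ 2 * p ^ 2 * (1 + n * p ^ 2) ^ 2) := by
        simp only [ite_and, sum_add_distrib, sum_ite_irrel, sum_ite_eq', sum_ite_eq, mem_univ,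
          if_true, sum_const_zero, sum_const, card_univ, hα, nsmul_eq_mul]
        ring
    _ ≤ 132 * (n * p) ^ 4 * (1 + n * p ^ 2 + n ^ 2 * p ^ 4) := by
        set x := (n : ℝ) * p
        have hx4 : 0 ≤ x ^ 4 := by positivity
        have hx2 : x ^ 2 ≤ x ^ 4 := pow_le_pow_right₀ hnp (by norm_num)
        have hp42 : p ^ 4 ≤ p ^ 2 := pow_le_pow_of_le_one hp0 hp1 (by norm_num)
        have hsq : (1 + n * p ^ 2) ^ 2 ≤ 2 * (1 + n ^ 2 * p ^ 4) := by
          nlinarith [sq_nonneg (1 - n * p ^ 2)]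
        have e₃ : n * (30 * (n * p ^ 2 + (n * p ^ 2) ^ 4))
            = 30 * (x ^ 2 + x ^ 4 * (n * p ^ 4)) := by
          ring
        have e₂ : 2 * n * (24 * x ^ 3 * p * (1 + n * p ^ 2)) = 48 * x ^ 4 * (1 + n * p ^ 2) := by
          ring
        have e₄ : n ^ 2 * (12 * x ^ 2 * p ^ 2 * (1 + n * p ^ 2) ^ 2)
            = 12 * x ^ 4 * (1 + n * p ^ 2) ^ 2 := by
          ring
        rw [e₃, e₂, e₄]
        nlinarith [mul_le_mul_of_nonneg_left hsq hx4,
          mul_le_mul_of_nonneg_left hp42 (mul_nonneg hx4 hn)]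

end CrossMoment

lemma prod_insert_of_zero_or_one {ι : Type*} [DecidableEq ι] {f : ι → ℝ}
    (hf : ∀ t, f t = 0 ∨ f t = 1) (x : ι) (s : Finset ι) :
    ∏ t ∈ insert x s, f t = f x * ∏ t ∈ s, f t := by
  by_cases hx : x ∈ s
  · rcases hf x with h | h
    · rw [insert_eq_of_mem hx, h, zero_mul, prod_eq_zero hx h]
    · rw [insert_eq_of_mem hx, h, one_mul]
  · exact prod_insert hx

section Gram

variable {α β : Type*} [Fintype α]

lemma abs_gram_le_card {M : Matrix α β ℝ} (hM : ∀ r c, M r c = 0 ∨ M r c = 1) (i j : β) :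
    |(Mᵀ * M) i j| ≤ Fintype.card α := by
  have hentry (r : α) : |M r i * M r j| ≤ 1 := by
    rcases hM r i with h | h <;> rcases hM r j with h' | h' <;> simp [h, h']
  calc |(Mᵀ * M) i j| ≤ ∑ r, |M r i * M r j| := by
        simpa [mul_apply] using abs_sum_le_sum_abs (fun r => M r i * M r j) univ
    _ ≤ ∑ _r : α, (1 : ℝ) := sum_le_sum fun r _ => hentry r
    _ = Fintype.card α := by simp

variable [DecidableEq α] [DecidableEq β]

lemma gram_sq_mul_gram_sq_eq_sum {M : Matrix α β ℝ} (hM : ∀ r c, M r c = 0 ∨ M r c = 1)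
    (i j k l : β) :
    (Mᵀ * M) i j ^ 2 * (Mᵀ * M) k l ^ 2 = ∑ r₁, ∑ r₂, ∑ r₃, ∑ r₄,
      ∏ t ∈ {r₁, r₂} ×ˢ {i, j} ∪ {r₃, r₄} ×ˢ {k, l}, M t.1 t.2 := by
  have hsupp (r₁ r₂ r₃ r₄ : α) : ({r₁, r₂} ×ˢ {i, j} ∪ {r₃, r₄} ×ˢ {k, l} : Finset (α × β)) =
      {(r₁, i), (r₁, j), (r₂, i), (r₂, j), (r₃, k), (r₃, l), (r₄, k), (r₄, l)} := by
    ext ⟨a, b⟩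
    simp only [mem_union, mem_product, mem_insert, mem_singleton, Prod.mk.injEq]
    tauto
  simp only [hsupp, prod_insert_of_zero_or_one (fun t : α × β => hM t.1 t.2), prod_singleton,
    mul_apply, transpose_apply]
  rw [sq, sq, sum_mul_sum, sum_mul_sum]
  simp only [sum_mul]
  simp only [mul_sum]
  refine sum_congr rfl fun r₁ _ => sum_congr rfl fun r₂ _ => sum_congr rfl fun r₃ _ =>
    sum_congr rfl fun r₄ _ => by ring

end Gram

section Bernoulli

variable {Ω ι : Type*} [MeasurableSpace Ω] {μ : Measure Ω} {p : ℝ}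

lemma IsBernoulli.integral_eq {X : Ω → ℝ} (hX : Measurable X) (h : IsBernoulli μ X p)
    (hp : 0 ≤ p) : ∫ ω, X ω ∂μ = p := by
  have hX1 : X = (X ⁻¹' {1}).indicator 1 := by
    funext ω; rcases h.1 ω with h0 | h1 <;> simp [Set.indicator, *]
  rw [hX1, integral_indicator_one (hX (measurableSet_singleton 1)), measureReal_def]
  simp [Set.preimage, h.2, ENNReal.toReal_ofReal hp]

lemma integral_prod_eq_pow_card_of_isBernoulli [IsProbabilityMeasure μ] {X : ι → Ω → ℝ}
    (hmeas : ∀ t, Measurable (X t)) (hber : ∀ t, IsBernoulli μ (X t) p) (hp : 0 ≤ p)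
    (hind : iIndepFun X μ) (T : Finset ι) :
    ∫ ω, ∏ t ∈ T, X t ω ∂μ = p ^ #T := by
  simp_rw [← prod_coe_sort T]
  rw [← Fintype.card_coe, ← card_univ, ← prod_const,
    (hind.precomp Subtype.val_injective).integral_fun_prod_eq_prod_integral
      fun t => (hmeas t).aestronglyMeasurable]
  exact prod_congr rfl fun t _ => (hber t).integral_eq (hmeas t) hp

end Bernoulli

section GramMoments

variable {Ω α β : Type*} [MeasurableSpace Ω] {μ : Measure Ω} [Fintype α] {p : ℝ}
  {A : Ω → Matrix α β ℝ}

lemma measurable_gram (hmeas : ∀ r c, Measurable fun ω => A ω r c) (i j : β) :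
    Measurable fun ω => ((A ω)ᵀ * A ω) i j := by
  simp only [mul_apply, transpose_apply]
  fun_prop

lemma memLp_gram_sq [IsFiniteMeasure μ] (hmeas : ∀ r c, Measurable fun ω => A ω r c)
    (hA : ∀ ω r c, A ω r c = 0 ∨ A ω r c = 1) (i j : β) :
    MemLp (fun ω => ((A ω)ᵀ * A ω) i j ^ 2) 2 μ := by
  refine MemLp.of_bound ((measurable_gram hmeas i j).pow_const 2).aestronglyMeasurable
    (Fintype.card α ^ 2) (ae_of_all _ fun ω => ?_)
  rw [Real.norm_eq_abs, abs_pow]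
  exact pow_le_pow_left₀ (abs_nonneg _) (abs_gram_le_card (hA ω) i j) 2

lemma indepFun_gram_sq (hmeas : ∀ r c, Measurable fun ω => A ω r c)
    (hind : iIndepFun (fun t : α × β => fun ω => A ω t.1 t.2) μ) [DecidableEq β] {i j k l : β}
    (hdisj : ¬(i = k ∨ i = l ∨ j = k ∨ j = l)) :
    IndepFun (fun ω => ((A ω)ᵀ * A ω) i j ^ 2) (fun ω => ((A ω)ᵀ * A ω) k l ^ 2) μ := by
  set S : Finset (α × β) := univ ×ˢ {i, j}
  set T : Finset (α × β) := univ ×ˢ {k, l}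
  have hST : Disjoint S T := by
    simp only [S, T, disjoint_product, disjoint_insert_left, disjoint_insert_right,
      disjoint_singleton, mem_insert, mem_singleton]
    tauto
  have hφ (S : Finset (α × β)) (a b : β) (ha : ∀ r, (r, a) ∈ S) (hb : ∀ r, (r, b) ∈ S) :
      Measurable fun g : S → ℝ => (∑ r, g ⟨(r, a), ha r⟩ * g ⟨(r, b), hb r⟩) ^ 2 := by
    fun_prop
  exact (hind.indepFun_finset S T hST fun t => hmeas t.1 t.2).comp
    (hφ S i j (by simp [S]) (by simp [S])) (hφ T k l (by simp [T]) (by simp [T]))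

variable [IsProbabilityMeasure μ] [DecidableEq α] [DecidableEq β]

lemma integral_gram_sq_mul_gram_sq (hmeas : ∀ r c, Measurable fun ω => A ω r c)
    (hber : ∀ r c, IsBernoulli μ (fun ω => A ω r c) p) (hp : 0 ≤ p)
    (hind : iIndepFun (fun t : α × β => fun ω => A ω t.1 t.2) μ) (i j k l : β) :
    ∫ ω, ((A ω)ᵀ * A ω) i j ^ 2 * ((A ω)ᵀ * A ω) k l ^ 2 ∂μ = gramCrossMoment α p i j k l := by
  have hint (T : Finset (α × β)) : Integrable (fun ω => ∏ t ∈ T, A ω t.1 t.2) μ := by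
    refine Integrable.of_bound
      (Finset.measurable_prod T fun t _ => hmeas t.1 t.2).aestronglyMeasurable 1
      (ae_of_all _ fun ω => ?_)
    rw [Real.norm_eq_abs, abs_prod]
    exact prod_le_one (fun _ _ => abs_nonneg _) fun t _ => by
      rcases (hber t.1 t.2).1 ω with h | h <;> simp [h]
  simp_rw [gram_sq_mul_gram_sq_eq_sum fun r c => (hber r c).1 _]
  rw [integral_finsetSum _ fun _ _ => integrable_finsetSum _ fun _ _ =>
    integrable_finsetSum _ fun _ _ => integrable_finsetSum _ fun _ _ => hint _]
  refine sum_congr rfl fun r₁ _ => ?_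
  rw [integral_finsetSum _ fun _ _ => integrable_finsetSum _ fun _ _ =>
    integrable_finsetSum _ fun _ _ => hint _]
  refine sum_congr rfl fun r₂ _ => ?_
  rw [integral_finsetSum _ fun _ _ => integrable_finsetSum _ fun _ _ => hint _]
  refine sum_congr rfl fun r₃ _ => ?_
  rw [integral_finsetSum _ fun _ _ => hint _]
  exact sum_congr rfl fun r₄ _ => integral_prod_eq_pow_card_of_isBernoulli
    (fun t : α × β => hmeas t.1 t.2) (fun t => hber t.1 t.2) hp hind _

lemma covariance_gram_sq_le (hmeas : ∀ r c, Measurable fun ω => A ω r c)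
    (hber : ∀ r c, IsBernoulli μ (fun ω => A ω r c) p) (hp : 0 ≤ p)
    (hind : iIndepFun (fun t : α × β => fun ω => A ω t.1 t.2) μ) (i j k l : β) :
    cov[fun ω => ((A ω)ᵀ * A ω) i j ^ 2, fun ω => ((A ω)ᵀ * A ω) k l ^ 2; μ]
      ≤ if i = k ∨ i = l ∨ j = k ∨ j = l then gramCrossMoment α p i j k l else 0 := by
  have hA (ω : Ω) (r : α) (c : β) := (hber r c).1 ω
  split_ifs with hshared
  · rw [covariance_eq_sub (memLp_gram_sq hmeas hA i j) (memLp_gram_sq hmeas hA k l)]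
    have h₁ : 0 ≤ ∫ ω, ((A ω)ᵀ * A ω) i j ^ 2 ∂μ := integral_nonneg fun ω => sq_nonneg _
    have h₂ : 0 ≤ ∫ ω, ((A ω)ᵀ * A ω) k l ^ 2 ∂μ := integral_nonneg fun ω => sq_nonneg _
    simp only [Pi.mul_apply]
    rw [integral_gram_sq_mul_gram_sq hmeas hber hp hind i j k l]
    exact sub_le_self _ (mul_nonneg h₁ h₂)
  · exact ((indepFun_gram_sq hmeas hind hshared).covariance_eq_zero
      (memLp_gram_sq hmeas hA i j) (memLp_gram_sq hmeas hA k l)).le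

lemma variance_sum_sum_gram_sq_le [Fintype β] (hmeas : ∀ r c, Measurable fun ω => A ω r c)
    (hber : ∀ r c, IsBernoulli μ (fun ω => A ω r c) p) (hp : 0 ≤ p)
    (hind : iIndepFun (fun t : α × β => fun ω => A ω t.1 t.2) μ) :
    variance (fun ω => ∑ i, ∑ j, ((A ω)ᵀ * A ω) i j ^ 2) μ
      ≤ 4 * ∑ i : β, ∑ j : β, ∑ l : β, gramCrossMoment α p i j i l := by
  have hA (ω : Ω) (r : α) (c : β) := (hber r c).1 ω
  calc variance (fun ω => ∑ i, ∑ j, ((A ω)ᵀ * A ω) i j ^ 2) μ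
      = ∑ q : β × β, ∑ q' : β × β, cov[fun ω => ((A ω)ᵀ * A ω) q.1 q.2 ^ 2,
          fun ω => ((A ω)ᵀ * A ω) q'.1 q'.2 ^ 2; μ] := by
        rw [← variance_fun_sum fun q : β × β => memLp_gram_sq hmeas hA q.1 q.2]
        simp_rw [Fintype.sum_prod_type]
    _ = ∑ i, ∑ j, ∑ k, ∑ l, cov[fun ω => ((A ω)ᵀ * A ω) i j ^ 2,
          fun ω => ((A ω)ᵀ * A ω) k l ^ 2; μ] := by
        simp_rw [Fintype.sum_prod_type]
    _ ≤ ∑ i, ∑ j, ∑ k, ∑ l,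
          (if i = k ∨ i = l ∨ j = k ∨ j = l then gramCrossMoment α p i j k l else 0) := by
        gcongr with i _ j _ k _ l _
        exact covariance_gram_sq_le hmeas hber hp hind i j k l
    _ ≤ 4 * ∑ i : β, ∑ j : β, ∑ l : β, gramCrossMoment α p i j i l :=
        sum_ite_shared_le (gramCrossMoment_nonneg hp) (gramCrossMoment_comm_left p)
          (gramCrossMoment_comm_right p)

end GramMoments

/-- if all entries of `A` are i.i.d. Bernoulli(p) with `np ≥ 1` and
`Ã = A/√(np)`, then `Var(‖ÃᵀÃ‖_F²) ≤ C(n + n²p² + n³p⁴)` for a universal constant `C`. -/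
theorem gram_frobenius_variance_bound :
    ∃ C : ℝ, 0 < C ∧
      ∀ (Ω : Type) (mΩ : MeasurableSpace Ω) (μ : Measure Ω), IsProbabilityMeasure μ →
      ∀ (n : ℕ) (p : ℝ), 0 < p → p ≤ 1 → 1 ≤ (n : ℝ) * p →
      ∀ A : Ω → Matrix (Fin n) (Fin n) ℝ,
        (∀ i j, Measurable fun ω => A ω i j) →
        (∀ i j, IsBernoulli μ (fun ω => A ω i j) p) →
        iIndepFun
          (fun (q : Fin n × Fin n) => fun ω => A ω q.1 q.2) μ →
        variance (fun ω => (∑ i, ∑ j, (((A ω)ᵀ * A ω) i j) ^ 2) / ((n : ℝ) * p) ^ 2) μ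
          ≤ C * ((n : ℝ) + (n : ℝ) ^ 2 * p ^ 2 + (n : ℝ) ^ 3 * p ^ 4) := by
  refine ⟨528, by norm_num, ?_⟩
  intro Ω _ μ _ n p hp0 hp1 hnp A hmeas hber hind
  have hx : 0 < (n : ℝ) * p := by linarith
  calc variance (fun ω => (∑ i, ∑ j, ((A ω)ᵀ * A ω) i j ^ 2) / ((n : ℝ) * p) ^ 2) μ
      = variance (fun ω => ∑ i, ∑ j, ((A ω)ᵀ * A ω) i j ^ 2) μ / ((n : ℝ) * p) ^ 4 := by
        simp_rw [div_eq_mul_inv, variance_mul_const]; ring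
    _ ≤ (4 * ∑ i, ∑ j, ∑ l, gramCrossMoment (Fin n) p i j i l) / ((n : ℝ) * p) ^ 4 := by
        gcongr
        exact variance_sum_sum_gram_sq_le hmeas hber hp0.le hind
    _ ≤ (4 * ∑ _i : Fin n, 132 * ((n : ℝ) * p) ^ 4 * (1 + n * p ^ 2 + n ^ 2 * p ^ 4))
          / ((n : ℝ) * p) ^ 4 := by
        gcongr with i
        exact sum_sum_gramCrossMoment_le (Fintype.card_fin n) hp0.le hp1 hnp i
    _ = 528 * ((n : ℝ) + (n : ℝ) ^ 2 * p ^ 2 + (n : ℝ) ^ 3 * p ^ 4) := by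
        rw [sum_const, card_univ, Fintype.card_fin, nsmul_eq_mul]
        field_simp
        ring
end

section
/- Let B be a centered Bernoulli(p) random variable, i.e., B = A − p with A ~ Bernoulli(p), p ∈ (0,1), p ≠ 1/2. Then B is sub-Gaussian with variance proxy Q^2(p) = (1−2p)/(2 log((1−p)/p)); that is, E[exp(λB)] ≤ exp(λ^2 Q^2(p)/2) for all λ ∈ R. -/
open MeasureTheory ProbabilityTheory Real

open Set

/-! With `L = log ((1 - p) / p)` the cumulant generating function of `A - p` is
`(1/2 - p) t + log cosh ((t - L) / 2) - log cosh (L / 2)`. Because `tanh s / s` decreases on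
`s > 0`, the function `log cosh √x` is concave in `x`, so `log cosh s` lies below the parabola
`log cosh a + tanh a / (2 a) * (s ^ 2 - a ^ 2)` touching it at `s = ± a`. For `a = L / 2` one
has `tanh a = 1 - 2 p`, and the linear terms in `t` cancel, leaving exactly
`(1 - 2 p) t ^ 2 / (4 L)`. -/

lemma self_le_sinh_mul_cosh {x : ℝ} (hx : 0 ≤ x) : x ≤ sinh x * cosh x := by
  have := self_le_sinh_iff.2 (by positivity : 0 ≤ 2 * x)
  rw [sinh_two_mul] at this
  linarith

lemma hasDerivAt_tanh_div_self {x : ℝ} (hx : x ≠ 0) :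
    HasDerivAt (fun y => tanh y / y) ((x - sinh x * cosh x) / (x * cosh x) ^ 2) x := by
  have hc := (cosh_pos x).ne'
  simp only [tanh_eq_sinh_div_cosh]
  refine (((hasDerivAt_sinh x).div (hasDerivAt_cosh x) hc).div (hasDerivAt_id' x) hx).congr_deriv ?_
  simp only [Pi.div_apply]
  field_simp
  linear_combination x * cosh_sq_sub_sinh_sq x

lemma antitoneOn_tanh_div_self : AntitoneOn (fun x => tanh x / x) (Ioi 0) := by
  refine antitoneOn_of_hasDerivWithinAt_nonpos
    (f' := fun x => (x - sinh x * cosh x) / (x * cosh x) ^ 2) (convex_Ioi 0) ?_ ?_ ?_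
  · exact fun x hx => (hasDerivAt_tanh_div_self (ne_of_gt hx)).continuousAt.continuousWithinAt
  · rw [interior_Ioi]
    exact fun x hx => (hasDerivAt_tanh_div_self (ne_of_gt hx)).hasDerivWithinAt
  · rw [interior_Ioi]
    exact fun x hx => div_nonpos_of_nonpos_of_nonneg
      (sub_nonpos.2 (self_le_sinh_mul_cosh (le_of_lt hx))) (sq_nonneg _)

lemma log_cosh_sub_log_cosh_le_of_pos {a s : ℝ} (ha : 0 < a) (hs : 0 ≤ s) :
    log (cosh s) - log (cosh a) ≤ tanh a / (2 * a) * (s ^ 2 - a ^ 2) := by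
  set k := tanh a / (2 * a) with hk
  have h2k : 2 * k = tanh a / a := by rw [hk]; field_simp
  set ψ : ℝ → ℝ := fun y => log (cosh y) - k * y ^ 2
  have hψ (y : ℝ) : HasDerivAt ψ (tanh y - 2 * k * y) y := by
    refine (((hasDerivAt_cosh y).log (cosh_pos y).ne').sub
      ((hasDerivAt_pow 2 y).const_mul k)).congr_deriv ?_
    rw [tanh_eq_sinh_div_cosh]
    ring
  have hψ_cont : Continuous ψ := continuous_iff_continuousAt.2 fun y => (hψ y).continuousAt
  have hψ_mono : MonotoneOn ψ (Icc 0 a) := by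
    refine monotoneOn_of_hasDerivWithinAt_nonneg (convex_Icc 0 a) hψ_cont.continuousOn
      (fun y _ => (hψ y).hasDerivWithinAt) fun y hy => ?_
    rw [interior_Icc] at hy
    have : tanh a / a ≤ tanh y / y := antitoneOn_tanh_div_self hy.1 ha hy.2.le
    rw [← h2k] at this
    exact sub_nonneg.2 ((le_div_iff₀ hy.1).1 this)
  have hψ_anti : AntitoneOn ψ (Ici a) := by
    refine antitoneOn_of_hasDerivWithinAt_nonpos (convex_Ici a) hψ_cont.continuousOn
      (fun y _ => (hψ y).hasDerivWithinAt) fun y hy => ?_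
    rw [interior_Ici] at hy
    have : tanh y / y ≤ tanh a / a := antitoneOn_tanh_div_self ha (ha.trans hy) hy.le
    rw [← h2k] at this
    exact sub_nonpos.2 ((div_le_iff₀ (ha.trans hy)).1 this)
  have hψ_le : ψ s ≤ ψ a := by
    rcases le_total s a with h | h
    · exact hψ_mono ⟨hs, h⟩ ⟨ha.le, le_rfl⟩ h
    · exact hψ_anti (mem_Ici.2 le_rfl) h h
  simp only [ψ] at hψ_le
  linarith

lemma log_cosh_sub_log_cosh_le {a : ℝ} (ha : a ≠ 0) (s : ℝ) :
    log (cosh s) - log (cosh a) ≤ tanh a / (2 * a) * (s ^ 2 - a ^ 2) := by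
  have key := log_cosh_sub_log_cosh_le_of_pos (abs_pos.2 ha) (abs_nonneg s)
  have hk : tanh |a| / (2 * |a|) = tanh a / (2 * a) := by
    rcases abs_choice a with h | h <;> rw [h]
    rw [tanh_neg]
    ring
  rwa [cosh_abs, cosh_abs, sq_abs, sq_abs, hk] at key

namespace IsBernoulli

variable {Ω : Type*} [MeasurableSpace Ω] {μ : Measure Ω} {A : Ω → ℝ} {p : ℝ}

lemma eq_indicator (h : IsBernoulli μ A p) : A = {ω | A ω = 1}.indicator 1 := by
  funext ω
  rcases h.1 ω with hω | hω <;> simp [hω]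

lemma integral_eq_s7 (h : IsBernoulli μ A p) (hA : Measurable A) (hp : 0 ≤ p) :
    ∫ ω, A ω ∂μ = p := by
  have hS : MeasurableSet {ω | A ω = 1} := hA (measurableSet_singleton 1)
  rw [h.eq_indicator, integral_indicator_one hS, measureReal_def, h.2, ENNReal.toReal_ofReal hp]

lemma integral_comp [IsProbabilityMeasure μ] (h : IsBernoulli μ A p) (hA : Measurable A)
    (hp : 0 ≤ p) (f : ℝ → ℝ) : ∫ ω, f (A ω) ∂μ = (1 - p) * f 0 + p * f 1 := by
  have hf : ∀ ω, f (A ω) = f 0 + (f 1 - f 0) * A ω := fun ω => by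
    rcases h.1 ω with hω | hω <;> simp [hω]
  have hA_int : Integrable A μ := by
    rw [h.eq_indicator]
    exact (integrable_const 1).indicator (hA (measurableSet_singleton 1))
  simp_rw [hf]
  rw [integral_add (integrable_const _) (hA_int.const_mul _), integral_const, integral_const_mul,
    h.integral_eq_s7 hA hp, probReal_univ, smul_eq_mul]
  ring

end IsBernoulli

lemma exp_log_odds_half_sq {p : ℝ} (hp0 : 0 < p) (hp1 : p < 1) :
    exp (log ((1 - p) / p) / 2) ^ 2 = (1 - p) / p := by
  rw [← exp_nat_mul, Nat.cast_ofNat, mul_div_cancel₀ _ two_ne_zero,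
    exp_log (div_pos (sub_pos.2 hp1) hp0)]

lemma tanh_half_log_odds {p : ℝ} (hp0 : 0 < p) (hp1 : p < 1) :
    tanh (log ((1 - p) / p) / 2) = 1 - 2 * p := by
  have hu := exp_log_odds_half_sq hp0 hp1
  have hu0 := (exp_pos (log ((1 - p) / p) / 2)).ne'
  rw [tanh_eq, exp_neg]
  field_simp
  rw [hu]
  field_simp
  ring

lemma bernoulli_mgf_eq {p : ℝ} (hp0 : 0 < p) (hp1 : p < 1) (t : ℝ) :
    (1 - p) * exp (-p * t) + p * exp ((1 - p) * t) =
      exp ((1 / 2 - p) * t + (log (cosh ((t - log ((1 - p) / p)) / 2))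
        - log (cosh (log ((1 - p) / p) / 2)))) := by
  set L := log ((1 - p) / p)
  have hu := exp_log_odds_half_sq hp0 hp1
  rw [exp_add, exp_sub, exp_log (cosh_pos _), exp_log (cosh_pos _), cosh_eq, cosh_eq]
  have h1 : exp ((1 - p) * t) = exp (t / 2) ^ 2 * exp (-p * t) := by
    rw [← exp_nat_mul, ← exp_add]; ring_nf
  have h2 : exp ((1 / 2 - p) * t) = exp (t / 2) * exp (-p * t) := by
    rw [← exp_add]; ring_nf
  have h3 : exp ((t - L) / 2) = exp (t / 2) / exp (L / 2) := by
    rw [← exp_sub]; ring_nf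
  have h4 : exp (-((t - L) / 2)) = exp (L / 2) / exp (t / 2) := by
    rw [← exp_sub]; ring_nf
  rw [h1, h2, h3, h4, exp_neg (L / 2)]
  field_simp
  rw [hu]
  field_simp
  ring

lemma bernoulli_mgf_le {p : ℝ} (hp0 : 0 < p) (hp1 : p < 1) (hphalf : p ≠ 1 / 2) (t : ℝ) :
    (1 - p) * exp (-p * t) + p * exp ((1 - p) * t)
      ≤ exp (t ^ 2 * ((1 - 2 * p) / (2 * log ((1 - p) / p))) / 2) := by
  set L := log ((1 - p) / p)
  have hL : L ≠ 0 := by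
    refine log_ne_zero_of_pos_of_ne_one (div_pos (sub_pos.2 hp1) hp0) fun h => hphalf ?_
    rw [div_eq_one_iff_eq hp0.ne'] at h
    linarith
  have hcosh := log_cosh_sub_log_cosh_le (div_ne_zero hL two_ne_zero) ((t - L) / 2)
  rw [tanh_half_log_odds hp0 hp1] at hcosh
  rw [bernoulli_mgf_eq hp0 hp1]
  refine exp_le_exp.2 ?_
  calc _ ≤ (1 / 2 - p) * t + (1 - 2 * p) / (2 * (L / 2)) * (((t - L) / 2) ^ 2 - (L / 2) ^ 2) := by
        linarith
    _ = _ := by field_simp; ring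

/-- a centered Bernoulli(p) variable `B = A − p` is sub-Gaussian with
the optimal variance proxy `Q²(p) = (1−2p)/(2 log((1−p)/p))`:
`E[exp(λB)] ≤ exp(λ² Q²(p)/2)` for all real `λ`. -/
theorem bernoulli_optimal_subgaussian {Ω : Type*} [MeasurableSpace Ω] (μ : Measure Ω)
    [IsProbabilityMeasure μ] (p : ℝ) (hp0 : 0 < p) (hp1 : p < 1) (hphalf : p ≠ 1 / 2)
    (A : Ω → ℝ) (hmeas : Measurable A) (hber : IsBernoulli μ A p) :
    ∀ l : ℝ, ∫ ω, Real.exp (l * (A ω - p)) ∂μ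
      ≤ Real.exp (l ^ 2 * ((1 - 2 * p) / (2 * Real.log ((1 - p) / p))) / 2) := by
  intro l
  calc ∫ ω, exp (l * (A ω - p)) ∂μ = (1 - p) * exp (-p * l) + p * exp ((1 - p) * l) := by
        rw [hber.integral_comp hmeas hp0.le fun x => exp (l * (x - p))]
        ring_nf
    _ ≤ _ := bernoulli_mgf_le hp0 hp1 hphalf l
end

section
/- Let M be a symmetric d×d matrix and Σ a symmetric d×d matrix with largest eigenvalue λ_max(Σ) and ‖M − Σ‖_∞ ≤ ε (entrywise max norm). Then for every nonzero v in the cone C(s,κ) = {v : ‖v_{S^c}‖_1 ≤ κ‖v_S‖_1, |S| = s}, we have v^T M v / ‖v‖_2^2 ≤ λ_max(Σ) + (1+κ)^2 s ε. -/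
/-!
Split `vᵀMv = vᵀΣv + vᵀ(M - Σ)v`. The first term is at most `λ_max ‖v‖₂²` because
`λ_max • 1 - Σ` is positive semidefinite. The second is at most `ε ‖v‖₁²`, and on the cone
`‖v‖₁ ≤ (1 + κ) ‖v_S‖₁ ≤ (1 + κ) √s ‖v‖₂` by Cauchy–Schwarz on `S`.
-/

open Matrix

open scoped MatrixOrder in
theorem Matrix.IsHermitian.dotProduct_mulVec_le_of_eigenvalues_le {n : Type*} [Fintype n]
    [DecidableEq n] {A : Matrix n n ℝ} (hA : A.IsHermitian) {c : ℝ}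
    (hc : ∀ i, hA.eigenvalues i ≤ c) (v : n → ℝ) :
    v ⬝ᵥ A *ᵥ v ≤ c * (v ⬝ᵥ v) := by
  have hle : A ≤ algebraMap ℝ (Matrix n n ℝ) c := by
    refine le_algebraMap_of_spectrum_le (fun x hx => ?_) hA.isSelfAdjoint
    obtain ⟨i, rfl⟩ := hA.spectrum_real_eq_range_eigenvalues ▸ hx
    exact hc i
  have hpsd := (Matrix.le_iff.mp hle).dotProduct_mulVec_nonneg v
  rwa [star_trivial, Algebra.algebraMap_eq_smul_one, sub_mulVec, smul_mulVec, one_mulVec,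
    dotProduct_sub, dotProduct_smul, smul_eq_mul, sub_nonneg] at hpsd

theorem Matrix.abs_dotProduct_mulVec_le {n : Type*} [Fintype n] {A : Matrix n n ℝ} {ε : ℝ}
    (hA : ∀ i j, |A i j| ≤ ε) (v : n → ℝ) :
    |v ⬝ᵥ A *ᵥ v| ≤ ε * (∑ i, |v i|) ^ 2 :=
  calc |v ⬝ᵥ A *ᵥ v| = |∑ i, ∑ j, v i * A i j * v j| := by
        simp only [dotProduct, mulVec, Finset.mul_sum, mul_assoc]
    _ ≤ ∑ i, ∑ j, |v i| * ε * |v j| := by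
        refine (Finset.abs_sum_le_sum_abs _ _).trans (Finset.sum_le_sum fun i _ => ?_)
        refine (Finset.abs_sum_le_sum_abs _ _).trans (Finset.sum_le_sum fun j _ => ?_)
        rw [abs_mul, abs_mul]
        gcongr
        exact hA i j
    _ = ε * (∑ i, |v i|) ^ 2 := by
        rw [sq, Finset.sum_mul_sum, Finset.mul_sum]
        refine Finset.sum_congr rfl fun i _ => ?_
        rw [Finset.mul_sum]
        exact Finset.sum_congr rfl fun j _ => by ring

theorem sq_sum_abs_le_of_sum_abs_compl_le {ι : Type*} [Fintype ι] [DecidableEq ι] {S : Finset ι}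
    {κ : ℝ} (hκ : 0 ≤ κ) {v : ι → ℝ} (hcone : ∑ i ∈ Sᶜ, |v i| ≤ κ * ∑ i ∈ S, |v i|) :
    (∑ i, |v i|) ^ 2 ≤ (1 + κ) ^ 2 * S.card * ∑ i, v i ^ 2 := by
  have hl1 : ∑ i, |v i| ≤ (1 + κ) * ∑ i ∈ S, |v i| := by
    rw [← Finset.sum_add_sum_compl S fun i => |v i|]
    linarith
  have hS : (∑ i ∈ S, |v i|) ^ 2 ≤ S.card * ∑ i, v i ^ 2 :=
    calc (∑ i ∈ S, |v i|) ^ 2 ≤ S.card * ∑ i ∈ S, |v i| ^ 2 := sq_sum_le_card_mul_sum_sq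
      _ ≤ S.card * ∑ i, v i ^ 2 := by
        simp only [sq_abs]
        gcongr
        exact S.subset_univ
  calc (∑ i, |v i|) ^ 2 ≤ ((1 + κ) * ∑ i ∈ S, |v i|) ^ 2 := by
        gcongr
    _ ≤ (1 + κ) ^ 2 * (S.card * ∑ i, v i ^ 2) := by
        rw [mul_pow]
        gcongr
    _ = _ := by ring

theorem rayleigh_bound_on_cone_general (d s : ℕ) (hd : 0 < d) (κ ε : ℝ) (hκ : 0 ≤ κ) (hε : 0 ≤ ε)
    (M Sg : Matrix (Fin d) (Fin d) ℝ) (hSg : Sg.IsHermitian)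
    (hclose : ∀ i j, |M i j - Sg i j| ≤ ε)
    (v : Fin d → ℝ) (hv : v ≠ 0)
    (S : Finset (Fin d)) (hS : S.card = s)
    (hcone : ∑ i ∈ Sᶜ, |v i| ≤ κ * ∑ i ∈ S, |v i|) :
    (v ⬝ᵥ M.mulVec v) / (∑ i, (v i) ^ 2)
      ≤ Finset.univ.sup' ⟨(⟨0, hd⟩ : Fin d), Finset.mem_univ _⟩ hSg.eigenvalues
        + (1 + κ) ^ 2 * s * ε := by
  set lam := Finset.univ.sup' ⟨(⟨0, hd⟩ : Fin d), Finset.mem_univ _⟩ hSg.eigenvalues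
  have hnorm : v ⬝ᵥ v = ∑ i, v i ^ 2 := by simp only [dotProduct, sq]
  have hpos : 0 < ∑ i, v i ^ 2 := by
    obtain ⟨i, hi⟩ := Function.ne_iff.mp hv
    exact Finset.sum_pos' (fun j _ => sq_nonneg (v j)) ⟨i, Finset.mem_univ i, sq_pos_of_ne_zero hi⟩
  have hSg_le : v ⬝ᵥ Sg *ᵥ v ≤ lam * ∑ i, v i ^ 2 :=
    hnorm ▸ hSg.dotProduct_mulVec_le_of_eigenvalues_le
      (fun i => Finset.le_sup' _ (Finset.mem_univ i)) v
  have hdiff_le : v ⬝ᵥ (M - Sg) *ᵥ v ≤ ε * (∑ i, |v i|) ^ 2 :=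
    (le_abs_self _).trans ((M - Sg).abs_dotProduct_mulVec_le hclose v)
  have hl1_le : ε * (∑ i, |v i|) ^ 2 ≤ ε * ((1 + κ) ^ 2 * s * ∑ i, v i ^ 2) :=
    mul_le_mul_of_nonneg_left (hS ▸ sq_sum_abs_le_of_sum_abs_compl_le hκ hcone) hε
  rw [sub_mulVec, dotProduct_sub] at hdiff_le
  rw [div_le_iff₀ hpos]
  linarith

/-- if `M` and `Σ` are symmetric `d×d` matrices with `‖M − Σ‖_∞ ≤ ε`
entrywise, then for every nonzero `v` in the cone `C(s,κ)`,
`vᵀ M v / ‖v‖₂² ≤ λ_max(Σ) + (1+κ)² s ε`. -/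
theorem rayleigh_bound_on_cone (d s : ℕ) (hd : 0 < d) (κ ε : ℝ) (hκ : 0 ≤ κ) (hε : 0 ≤ ε)
    (M Sg : Matrix (Fin d) (Fin d) ℝ) (hM : M.IsHermitian) (hSg : Sg.IsHermitian)
    (hclose : ∀ i j, |M i j - Sg i j| ≤ ε)
    (v : Fin d → ℝ) (hv : v ≠ 0)
    (S : Finset (Fin d)) (hS : S.card = s)
    (hcone : ∑ i ∈ Sᶜ, |v i| ≤ κ * ∑ i ∈ S, |v i|) :
    (v ⬝ᵥ M.mulVec v) / (∑ i, (v i) ^ 2)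
      ≤ Finset.univ.sup' ⟨(⟨0, hd⟩ : Fin d), Finset.mem_univ _⟩ hSg.eigenvalues
        + (1 + κ) ^ 2 * s * ε :=
  rayleigh_bound_on_cone_general d s hd κ ε hκ hε M Sg hSg hclose v hv S hS hcone
end

section
/- Define Π_0(s) = {u ∈ R^d : ‖u‖_2 ≤ 1, ‖u‖_0 ≤ s} and Π_1(s) = {u ∈ R^d : ‖u‖_2 ≤ 1, ‖u‖_1 ≤ √s}. Then Π_1(s) is contained in 2 · conv̄(Π_0(s)), the closed convex hull of Π_0(s) dilated by factor 2. -/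
/-!
Split `u` into its large part, carried by the coordinates with `|uᵢ| ≥ R = 1/√s`, and the rest.
Since `‖u‖₁ ≤ √s = sR` there are at most `s` such coordinates, so the large part lies in `Π₀(s)`.
The rest lies in the compact convex polytope `{v : ‖v‖∞ ≤ R, ‖v‖₁ ≤ sR}`. At an extreme point of
it at most one coordinate satisfies `0 < |vᵢ| < R`, since otherwise mass can be moved between two
such coordinates in either direction; with `‖v‖₁ ≤ sR` this leaves at most `s` nonzero
coordinates, and `‖v‖₂² ≤ ‖v‖∞ ‖v‖₁ ≤ sR² = 1`. By Krein–Milman the polytope lies in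
`conv̄ Π₀(s)`, and `u` is twice the midpoint of the two parts.
-/

open Finset

theorem eq_zero_of_add_mem_of_sub_mem_of_mem_extremePoints {𝕜 E : Type*} [Ring 𝕜] [LinearOrder 𝕜]
    [IsStrictOrderedRing 𝕜] [Invertible (2 : 𝕜)] [AddCommGroup E] [Module 𝕜 E] {A : Set E}
    {x y : E} (hx : x ∈ A.extremePoints 𝕜) (hadd : x + y ∈ A) (hsub : x - y ∈ A) : y = 0 :=
  add_eq_left.mp (hx.2 hadd hsub (mem_openSegment_add_sub x y))

theorem Real.abs_add_mul_sign_of_abs_le {x t : ℝ} (h : |t| ≤ |x|) :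
    |x + t * Real.sign x| = |x| + t := by
  rcases lt_trichotomy x 0 with hx | rfl | hx
  · rw [abs_of_neg hx] at h
    rw [Real.sign_of_neg hx, abs_of_neg hx, abs_of_nonpos (by linarith [neg_abs_le t])]
    ring
  · simp_all
  · rw [abs_of_pos hx] at h
    rw [Real.sign_of_pos hx, abs_of_pos hx, abs_of_nonneg (by linarith [neg_abs_le t])]
    ring

section SparseVectors

variable {ι : Type*} [Fintype ι]

def sparseUnitBall (s : ℕ) : Set (EuclideanSpace ℝ ι) :=
  {u | ‖u‖ ≤ 1 ∧ #{i | u i ≠ 0} ≤ s}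

noncomputable def largePart (R : ℝ) (u : EuclideanSpace ℝ ι) : EuclideanSpace ℝ ι :=
  WithLp.toLp 2 ({i | R ≤ |u i|}.indicator u)

def boxL1Ball (R B : ℝ) : Set (EuclideanSpace ℝ ι) :=
  {v | (∀ i, |v i| ≤ R) ∧ ∑ i, |v i| ≤ B}

theorem convex_boxL1Ball (R B : ℝ) : Convex ℝ (boxL1Ball (ι := ι) R B) := by
  rintro v ⟨hvR, hvB⟩ w ⟨hwR, hwB⟩ a b ha hb hab
  have habs : ∀ i, |a * v i + b * w i| ≤ a * |v i| + b * |w i| := fun i =>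
    (abs_add_le _ _).trans_eq (by rw [abs_mul, abs_mul, abs_of_nonneg ha, abs_of_nonneg hb])
  refine ⟨fun i => ?_, ?_⟩
  · calc |a * v i + b * w i| ≤ a * |v i| + b * |w i| := habs i
      _ ≤ a * R + b * R := by gcongr <;> simp_all
      _ = R := by rw [← add_mul, hab, one_mul]
  · calc ∑ i, |a * v i + b * w i| ≤ ∑ i, (a * |v i| + b * |w i|) := sum_le_sum fun i _ => habs i
      _ = a * ∑ i, |v i| + b * ∑ i, |w i| := by rw [sum_add_distrib, mul_sum, mul_sum]
      _ ≤ a * B + b * B := by gcongr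
      _ = B := by rw [← add_mul, hab, one_mul]

theorem norm_sq_le_of_mem_boxL1Ball {R B : ℝ} (hR : 0 ≤ R) {v : EuclideanSpace ℝ ι}
    (hv : v ∈ boxL1Ball R B) : ‖v‖ ^ 2 ≤ R * B := by
  rw [EuclideanSpace.real_norm_sq_eq]
  calc ∑ i, v i ^ 2 = ∑ i, |v i| * |v i| := by simp only [← sq, sq_abs]
    _ ≤ ∑ i, R * |v i| := sum_le_sum fun i _ => by gcongr; exact hv.1 i
    _ = R * ∑ i, |v i| := (mul_sum ..).symm
    _ ≤ R * B := by gcongr; exact hv.2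

theorem isCompact_boxL1Ball {R : ℝ} (hR : 0 ≤ R) (B : ℝ) : IsCompact (boxL1Ball (ι := ι) R B) := by
  refine Metric.isCompact_of_isClosed_isBounded ?_ ?_
  · have : boxL1Ball (ι := ι) R B = (⋂ i, {v | |v i| ≤ R}) ∩ {v | ∑ i, |v i| ≤ B} := by
      ext; simp [boxL1Ball]
    rw [this]
    exact (isClosed_iInter fun i => isClosed_le (by fun_prop) continuous_const).inter
      (isClosed_le (by fun_prop) continuous_const)
  · refine (Metric.isBounded_closedBall (x := 0) (r := √(R * B))).subset fun v hv => ?_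
    rw [mem_closedBall_zero_iff]
    exact Real.le_sqrt_of_sq_le (norm_sq_le_of_mem_boxL1Ball hR hv)

theorem add_mul_sign_mem_boxL1Ball {R B : ℝ} {v : EuclideanSpace ℝ ι} (hv : v ∈ boxL1Ball R B)
    {c : ι → ℝ} (hc : ∑ i, c i = 0) (hcv : ∀ i, |c i| ≤ min |v i| (R - |v i|)) :
    v + WithLp.toLp 2 (fun i => c i * Real.sign (v i)) ∈ boxL1Ball R B := by
  have habs : ∀ i, |(v + WithLp.toLp 2 (fun i => c i * Real.sign (v i))) i| = |v i| + c i :=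
    fun i => Real.abs_add_mul_sign_of_abs_le ((hcv i).trans (min_le_left _ _))
  refine ⟨fun i => ?_, ?_⟩
  · rw [habs]
    linarith [le_abs_self (c i), (hcv i).trans (min_le_right _ _)]
  · simpa only [habs, sum_add_distrib, hc, add_zero] using hv.2

theorem subsingleton_fractional_of_mem_extremePoints {R B : ℝ} {v : EuclideanSpace ℝ ι}
    (hv : v ∈ (boxL1Ball R B).extremePoints ℝ) : {i | 0 < |v i| ∧ |v i| < R}.Subsingleton := by
  classical
  rintro i ⟨hi0, hiR⟩ j ⟨hj0, hjR⟩
  by_contra hij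
  set ε := min (min |v i| (R - |v i|)) (min |v j| (R - |v j|))
  have hε : 0 < ε := lt_min (lt_min hi0 (by linarith)) (lt_min hj0 (by linarith))
  set c : ι → ℝ := Pi.single i ε - Pi.single j ε
  have hc : ∑ k, c k = 0 := by simp [c, sum_sub_distrib]
  have hcv : ∀ k, |c k| ≤ min |v k| (R - |v k|) := by
    intro k
    by_cases hki : k = i
    · subst hki; simp [c, hij, ε, abs_of_pos hε]
    by_cases hkj : k = j
    · subst hkj; simp [c, Ne.symm hij, ε, abs_of_pos hε]
    · simp [c, hki, hkj, hv.1.1 k]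
  have hw := eq_zero_of_add_mem_of_sub_mem_of_mem_extremePoints hv
    (add_mul_sign_mem_boxL1Ball hv.1 hc hcv)
    (by
      convert add_mul_sign_mem_boxL1Ball (c := -c) hv.1 (by simp [hc]) (by simpa using hcv) using 1
      ext k; simp [sub_eq_add_neg])
  have hvi : v i = 0 := by simpa [c, hij, hε.ne'] using congrArg (· i) hw
  simp [hvi] at hi0

theorem card_support_le_of_subsingleton_fractional {R : ℝ} (hR : 0 < R) {s : ℕ} {v : ι → ℝ}
    (hvR : ∀ i, |v i| ≤ R) (hvs : ∑ i, |v i| ≤ s * R)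
    (hfrac : {i | 0 < |v i| ∧ |v i| < R}.Subsingleton) : #{i | v i ≠ 0} ≤ s := by
  set S := ({i | v i ≠ 0} : Finset ι)
  have hdefect : ∑ i ∈ S, (R - |v i|) < R := by
    by_cases h : ∃ a ∈ S, R - |v a| ≠ 0
    · obtain ⟨a, haS, ha⟩ := h
      have hafrac : ∀ b ∈ S, R - |v b| ≠ 0 → 0 < |v b| ∧ |v b| < R := fun b hb hne =>
        ⟨abs_pos.mpr (mem_filter.mp hb).2, lt_of_le_of_ne (hvR b) (sub_ne_zero.mp hne).symm⟩
      rw [sum_eq_single_of_mem a haS fun b hb hba => by_contra fun hne =>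
        hba (hfrac (hafrac b hb hne) (hafrac a haS ha))]
      linarith [abs_pos.mpr (mem_filter.mp haS).2]
    · push Not at h
      rw [sum_eq_zero h]
      exact hR
  have : (#S : ℝ) * R < (s + 1) * R :=
    calc (#S : ℝ) * R = ∑ i ∈ S, (R - |v i|) + ∑ i ∈ S, |v i| := by
          rw [← sum_add_distrib]; simp
      _ < R + ∑ i, |v i| := add_lt_add_of_lt_of_le hdefect
          (sum_le_sum_of_subset_of_nonneg (subset_univ _) fun i _ _ => abs_nonneg _)
      _ ≤ (s + 1) * R := by linarith
  have hS : (#S : ℝ) < s + 1 := lt_of_mul_lt_mul_right this hR.le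
  exact Nat.lt_succ_iff.mp (by exact_mod_cast hS)

theorem extremePoints_boxL1Ball_subset_sparseUnitBall {R : ℝ} (hR : 0 < R) {s : ℕ}
    (hRs : R * (s * R) ≤ 1) : (boxL1Ball R (s * R)).extremePoints ℝ ⊆ sparseUnitBall (ι := ι) s :=
  fun v hv =>
    ⟨(sq_le_one_iff₀ (norm_nonneg v)).mp ((norm_sq_le_of_mem_boxL1Ball hR.le hv.1).trans hRs),
    card_support_le_of_subsingleton_fractional hR hv.1.1 hv.1.2
      (subsingleton_fractional_of_mem_extremePoints hv)⟩

theorem boxL1Ball_subset_closure_convexHull_sparseUnitBall {R : ℝ} (hR : 0 < R) {s : ℕ}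
    (hRs : R * (s * R) ≤ 1) :
    boxL1Ball R (s * R) ⊆ closure (convexHull ℝ (sparseUnitBall (ι := ι) s)) :=
  calc boxL1Ball R (s * R) = closure (convexHull ℝ ((boxL1Ball R (s * R)).extremePoints ℝ)) :=
        (closure_convexHull_extremePoints (isCompact_boxL1Ball hR.le _) (convex_boxL1Ball _ _)).symm
    _ ⊆ _ := closure_mono (convexHull_mono (extremePoints_boxL1Ball_subset_sparseUnitBall hR hRs))

theorem largePart_mem_sparseUnitBall {R : ℝ} (hR : 0 < R) {s : ℕ}
    {u : EuclideanSpace ℝ ι} (hu : ‖u‖ ≤ 1) (hus : ∑ i, |u i| ≤ s * R) :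
    largePart R u ∈ sparseUnitBall s := by
  constructor
  · refine le_trans ?_ hu
    rw [← pow_le_pow_iff_left₀ (norm_nonneg _) (norm_nonneg _) two_ne_zero,
      EuclideanSpace.norm_sq_eq, EuclideanSpace.norm_sq_eq]
    exact sum_le_sum fun i _ => by gcongr; exact norm_indicator_le_norm_self _ _
  · set T := ({i | R ≤ |u i|} : Finset ι)
    have hT : (#T : ℝ) * R ≤ s * R :=
      calc (#T : ℝ) * R = #T • R := (nsmul_eq_mul _ _).symm
        _ ≤ ∑ i ∈ T, |u i| := card_nsmul_le_sum _ _ _ fun i hi => (mem_filter.mp hi).2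
        _ ≤ ∑ i, |u i| := sum_le_sum_of_subset_of_nonneg (subset_univ _) fun i _ _ => abs_nonneg _
        _ ≤ s * R := hus
    calc #{i | ({i | R ≤ |u i|} : Set ι).indicator u i ≠ 0} ≤ #T :=
          card_le_card fun i hi => by
            simpa [T] using Set.mem_of_indicator_ne_zero (mem_filter.mp hi).2
      _ ≤ s := by exact_mod_cast le_of_mul_le_mul_right hT hR

theorem sub_largePart_mem_boxL1Ball {R B : ℝ} (hR : 0 ≤ R) {u : EuclideanSpace ℝ ι}
    (huB : ∑ i, |u i| ≤ B) :
    u - largePart R u ∈ boxL1Ball R B := by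
  have hcoord : ∀ i, |(u - largePart R u) i| ≤ min R |u i| := by
    intro i
    by_cases h : R ≤ |u i| <;> simp [largePart, Set.indicator, h, hR, le_of_not_ge]
  refine ⟨fun i => (hcoord i).trans (min_le_left _ _), ?_⟩
  exact (sum_le_sum fun i _ => (hcoord i).trans (min_le_right _ _)).trans huB

end SparseVectors

open Pointwise

/-- Plan–Vershynin: `Π₁(s) ⊆ 2 · conv̄(Π₀(s))`, where
`Π₀(s)` is the set of `s`-sparse vectors in the unit Euclidean ball and
`Π₁(s)` is the set of unit-ball vectors with `‖u‖₁ ≤ √s`. -/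
theorem pi1_subset_two_convexHull_pi0 (d s : ℕ) :
    {u : EuclideanSpace ℝ (Fin d) | ‖u‖ ≤ 1 ∧ ∑ i, |u i| ≤ Real.sqrt s}
      ⊆ (2 : ℝ) • closure (convexHull ℝ
          {u : EuclideanSpace ℝ (Fin d) | ‖u‖ ≤ 1 ∧
            (Finset.univ.filter fun i => u i ≠ 0).card ≤ s}) := by
  rintro u ⟨hu, hus⟩
  obtain ⟨R, hR, hsR, hRs⟩ : ∃ R : ℝ, 0 < R ∧ s * R = √s ∧ R * √s ≤ 1 := by
    rcases s.eq_zero_or_pos with rfl | hs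
    -- for `s = 0` the threshold `1/√s` is junk (`0⁻¹ = 0`), but then any `R > 0` does
    · exact ⟨1, one_pos, by simp, by simp⟩
    · have : 0 < √(s : ℝ) := by positivity
      refine ⟨(√s)⁻¹, inv_pos.mpr this, ?_, (inv_mul_cancel₀ this.ne').le⟩
      rw [mul_inv_eq_iff_eq_mul₀ this.ne', Real.mul_self_sqrt (Nat.cast_nonneg s)]
  rw [← hsR] at hus
  have hmid : (1 / 2 : ℝ) • largePart R u + (1 / 2 : ℝ) • (u - largePart R u) ∈
      closure (convexHull ℝ (sparseUnitBall s)) :=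
    (convex_convexHull ℝ _).closure
      (subset_closure (subset_convexHull ℝ _ (largePart_mem_sparseUnitBall hR hu hus)))
      (boxL1Ball_subset_closure_convexHull_sparseUnitBall hR (hsR ▸ hRs)
        (sub_largePart_mem_boxL1Ball hR.le hus))
      (by norm_num) (by norm_num) (by norm_num)
  refine ⟨_, hmid, ?_⟩
  change (2 : ℝ) • _ = u
  rw [← smul_add, smul_smul, add_sub_cancel]
  norm_num
end
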